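/- (Theorem 2.4, third identity, q-case.) Let n ≥ 1 be a natural number, β₁, β₂ ∈ (0,1) and m₁ ∈ ℕ. Then the double series over all pairs (v₁,v₂) ∈ ℕ × ℕ of [v₁]_{m₁,q} · ( ∏_{i=1}^{m₁} (1 − β₁·q^{n+v₂+i−1}) ) · v(v₁,v₂) converges, with sum equal to [n+m₁−1]_{m₁,q} · β₁^{m₁} / ∏_{i=1}^{m₁} (1 − β₂·q^{n+i−1}). -/

import Mathlib

open Finset

/-- q-integer `[k]_q = (1 - q^k)/(1 - q)`. -/
noncomputable def qInt (q : ℝ) (k : ℤ) : ℝ := (1 - q ^ k) / (1 - q)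

/-- q-factorial `[n]_q! = ∏_{i=1}^n [i]_q`. -/
noncomputable def qFact (q : ℝ) (n : ℕ) : ℝ := ∏ i ∈ Finset.Icc 1 n, qInt q (i : ℤ)

/-- q-binomial coefficient `C_q(n,k)`. -/
noncomputable def qBinom (q : ℝ) (n k : ℕ) : ℝ := qFact q n / (qFact q k * qFact q (n - k))

/-- q-falling factorial `[u]_{m,q} = ∏_{i=1}^m [u-i+1]_q`. -/
noncomputable def qFall (q : ℝ) (u : ℤ) (m : ℕ) : ℝ := ∏ i ∈ Finset.Icc 1 m, qInt q (u - (i : ℤ) + 1)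

/-- `[k]_{q⁻¹} = q^{1-k} · [k]_q`. -/
noncomputable def qIntInv (q : ℝ) (k : ℤ) : ℝ := q ^ (1 - k) * qInt q k

/-- `[u]_{m,q⁻¹} = ∏_{i=1}^m [u-i+1]_{q⁻¹}`. -/
noncomputable def qFallInv (q : ℝ) (u : ℤ) (m : ℕ) : ℝ := ∏ i ∈ Finset.Icc 1 m, qIntInv q (u - (i : ℤ) + 1)

/-- `b(k) = k(k-1)/2`. -/
def bb (k : ℕ) : ℕ := k * (k - 1) / 2

/-- `⟨1 ⊕ α⟩_m = ∏_{i=1}^m (1 + α q^{i-1})`. -/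
noncomputable def oplus (q α : ℝ) (m : ℕ) : ℝ := ∏ i ∈ Finset.Icc 1 m, (1 + α * q ^ (i - 1))

/-- `⟨1 ⊖ β⟩_m = ∏_{i=1}^m (1 - β q^{i-1})`. -/
noncomputable def ominus (q β : ℝ) (m : ℕ) : ℝ := ∏ i ∈ Finset.Icc 1 m, (1 - β * q ^ (i - 1))

/-- q-trinomial coefficient `T_q(n; x₁, x₂)`. -/
noncomputable def qTri (q : ℝ) (n x1 x2 : ℕ) : ℝ :=
  qFact q n / (qFact q x1 * qFact q x2 * qFact q (n - x1 - x2))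

/-- pmf of the negative q-trinomial distribution of the second kind. -/
noncomputable def vpmf (q b1 b2 : ℝ) (n v1 v2 : ℕ) : ℝ :=
  (qFact q (n + v1 + v2 - 1) / (qFact q v1 * qFact q v2 * qFact q (n - 1))) *
    b1 ^ v1 * b2 ^ v2 * ominus q b1 (n + v2) * ominus q b2 n

/-!
The pmf factors as a negative q-binomial law in `v₁` with parameter `n + v₂` times one in `v₂`
with parameter `n`:
`v(v₁,v₂) = C_q(n+v₂+v₁-1, v₁) β₁^{v₁} ⟨1⊖β₁⟩_{n+v₂} · C_q(n+v₂-1, v₂) β₂^{v₂} ⟨1⊖β₂⟩_n`.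
The negative q-binomial theorem `∑_w C_q(N+w, w) x^w = 1/⟨1⊖x⟩_{N+1}` holds by induction on `N`:
multiplying by the geometric series in `x q^{N+1}` is, coefficientwise, the q-Pascal rule.
As `[w+m]_{m,q} C_q(N+w+m, w+m) = [N+m]_{m,q} C_q(N+m+w, w)` and `[v]_{m,q} = 0` for `v < m`,
the same series gives `∑_v [v]_{m,q} C_q(N+v, v) x^v = [N+m]_{m,q} x^m / ⟨1⊖x⟩_{N+m+1}`.
For fixed `v₂` the weight `∏ (1 - β₁ q^{n+v₂+i-1})` completes `⟨1⊖β₁⟩_{n+v₂}` to the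
`⟨1⊖β₁⟩_{n+v₂+m₁}` this sum divides by, and as
`[n+v₂+m₁-1]_{m₁,q} C_q(n+v₂-1, v₂) = [n+m₁-1]_{m₁,q} C_q(n+m₁+v₂-1, v₂)`, the sum over `v₂` is
again a negative q-binomial series. All terms are nonnegative, so the iterated sum is the double
sum.
-/

lemma HasSum.sum_antidiagonal_mul {f g : ℕ → ℝ} {a b : ℝ} (hf : HasSum f a)
    (hg : HasSum g b) :
    HasSum (fun n => ∑ kl ∈ antidiagonal n, f kl.1 * g kl.2) (a * b) := by
  have hf' : Summable fun n => ‖f n‖ := by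
    simpa only [Real.norm_eq_abs] using summable_abs_iff.mpr hf.summable
  have hg' : Summable fun n => ‖g n‖ := by
    simpa only [Real.norm_eq_abs] using summable_abs_iff.mpr hg.summable
  rw [← hf.tsum_eq, ← hg.tsum_eq,
    tsum_mul_tsum_eq_tsum_sum_antidiagonal_of_summable_norm hf' hg']
  exact (summable_norm_sum_mul_antidiagonal_of_summable_norm hf' hg').of_norm.hasSum

lemma HasSum.prod_of_nonneg_of_fiberwise {α β : Type*} {f : α × β → ℝ} (hf : 0 ≤ f)
    {g : β → ℝ} {a : ℝ} (hfib : ∀ b, HasSum (fun x => f (x, b)) (g b)) (hg : HasSum g a) : HasSum f a := by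
  rw [← (Equiv.prodComm β α).hasSum_iff]
  have hs : Summable (f ∘ Equiv.prodComm β α) :=
    (summable_prod_of_nonneg (f := f ∘ Equiv.prodComm β α) fun p => hf _).mpr
      ⟨fun b => (hfib b).summable, hg.summable.congr fun b => ((hfib b).tsum_eq).symm⟩
  rw [hg.unique (hs.hasSum.prod_fiberwise hfib)]
  exact hs.hasSum

section qCalculus

variable {q : ℝ}

lemma qInt_natCast (k : ℕ) : qInt q k = (1 - q ^ k) / (1 - q) := by
  simp [qInt, zpow_natCast]

lemma qInt_pos (hq0 : 0 ≤ q) (hq1 : q < 1) {k : ℕ} (hk : k ≠ 0) : 0 < qInt q k := by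
  rw [qInt_natCast]
  exact div_pos (sub_pos.mpr (pow_lt_one₀ hq0 hq1 hk)) (sub_pos.mpr hq1)

lemma qInt_add (hq1 : q ≠ 1) (a b : ℕ) :
    qInt q ((a + b : ℕ) : ℤ) = qInt q a + q ^ a * qInt q b := by
  have : 1 - q ≠ 0 := sub_ne_zero.mpr hq1.symm
  simp only [qInt_natCast, pow_add]
  field_simp
  ring

lemma qFact_zero : qFact q 0 = 1 := by
  simp [qFact]

lemma qFact_succ (n : ℕ) : qFact q (n + 1) = qFact q n * qInt q ((n + 1 : ℕ) : ℤ) := by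
  rw [qFact, prod_Icc_succ_top (by omega)]
  rfl

lemma qFact_pos (hq0 : 0 ≤ q) (hq1 : q < 1) (n : ℕ) : 0 < qFact q n :=
  prod_pos fun i hi => qInt_pos hq0 hq1 (by grind)

lemma qFall_eq_prod_range (u : ℤ) (m : ℕ) :
    qFall q u m = ∏ i ∈ range m, qInt q (u - i) := by
  rw [qFall, ← Ico_add_one_right_eq_Icc, prod_Ico_eq_prod_range]
  refine prod_congr rfl fun i _ => ?_
  push_cast
  ring_nf

lemma qFall_succ (u : ℤ) (m : ℕ) : qFall q u (m + 1) = qFall q (u - 1) m * qInt q u := by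
  simp only [qFall_eq_prod_range, prod_range_succ']
  push_cast
  ring_nf

lemma qFact_add (a m : ℕ) : qFact q (a + m) = qFact q a * qFall q ((a + m : ℕ) : ℤ) m := by
  induction m with
  | zero => simp [qFall]
  | succ m ih =>
    rw [← add_assoc, qFact_succ, ih, qFall_succ]
    push_cast
    ring_nf

lemma qFall_natCast_eq_zero {v m : ℕ} (h : v < m) : qFall q v m = 0 := by
  rw [qFall_eq_prod_range]
  exact prod_eq_zero (mem_range.mpr h) (by simp [qInt])

lemma qFall_natCast_nonneg (hq0 : 0 ≤ q) (hq1 : q < 1) (v m : ℕ) : 0 ≤ qFall q v m := by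
  rcases lt_or_ge v m with hvm | hmv
  · exact (qFall_natCast_eq_zero hvm).ge
  · rw [qFall_eq_prod_range]
    refine prod_nonneg fun i hi => ?_
    obtain ⟨j, hj⟩ : ∃ j : ℕ, (v : ℤ) - i = j := ⟨v - i, by grind⟩
    rw [hj]
    rcases eq_or_ne j 0 with rfl | hj0
    · simp [qInt]
    · exact (qInt_pos hq0 hq1 hj0).le

lemma qFall_natCast_add (hq0 : 0 ≤ q) (hq1 : q < 1) (a m : ℕ) :
    qFall q ((a + m : ℕ) : ℤ) m = qFact q (a + m) / qFact q a := by
  rw [qFact_add, mul_div_cancel_left₀ _ (qFact_pos hq0 hq1 a).ne']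

lemma qBinom_add (a b : ℕ) : qBinom q (a + b) b = qFact q (a + b) / (qFact q b * qFact q a) := by
  rw [qBinom, Nat.add_sub_cancel]

lemma qBinom_pos (hq0 : 0 ≤ q) (hq1 : q < 1) (n k : ℕ) : 0 < qBinom q n k :=
  div_pos (qFact_pos hq0 hq1 _) (mul_pos (qFact_pos hq0 hq1 _) (qFact_pos hq0 hq1 _))

lemma qBinom_add_succ_succ (hq0 : 0 ≤ q) (hq1 : q < 1) (N w : ℕ) :
    qBinom q (N + 1 + (w + 1)) (w + 1)
      = qBinom q (N + (w + 1)) (w + 1) + q ^ (N + 1) * qBinom q (N + 1 + w) w := by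
  rw [qBinom_add, qBinom_add, qBinom_add, show N + (w + 1) = N + 1 + w by ring,
    show N + 1 + (w + 1) = N + 1 + w + 1 by ring, qFact_succ (N + 1 + w), qFact_succ w,
    qFact_succ N,
    show N + 1 + w + 1 = (N + 1) + (w + 1) by ring, qInt_add hq1.ne]
  have hIN : qInt q ((N + 1 : ℕ) : ℤ) ≠ 0 := (qInt_pos hq0 hq1 N.succ_ne_zero).ne'
  have hIw : qInt q ((w + 1 : ℕ) : ℤ) ≠ 0 := (qInt_pos hq0 hq1 w.succ_ne_zero).ne'
  field_simp

lemma ominus_one (x : ℝ) : ominus q x 1 = 1 - x := by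
  simp [ominus]

lemma ominus_succ (x : ℝ) (N : ℕ) : ominus q x (N + 1) = ominus q x N * (1 - x * q ^ N) := by
  rw [ominus, prod_Icc_succ_top (by omega), Nat.add_sub_cancel]
  rfl

lemma ominus_add (x : ℝ) (a m : ℕ) :
    ominus q x (a + m) = ominus q x a * ∏ i ∈ Icc 1 m, (1 - x * q ^ (a + i - 1)) := by
  induction m with
  | zero => simp
  | succ m ih =>
    rw [← add_assoc, ominus_succ, ih, prod_Icc_succ_top (by omega),
      show a + (m + 1) - 1 = a + m by omega]
    ring

lemma ominus_pos (hq0 : 0 ≤ q) (hq1 : q ≤ 1) {x : ℝ} (hx0 : 0 ≤ x) (hx1 : x < 1) (m : ℕ) :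
    0 < ominus q x m :=
  prod_pos fun i _ => by nlinarith [pow_le_one₀ hq0 hq1 (n := i - 1)]

lemma qBinom_add_succ_eq_sum_antidiagonal (hq0 : 0 ≤ q) (hq1 : q < 1) (N w : ℕ) :
    qBinom q (N + 1 + w) w
      = ∑ kl ∈ antidiagonal w, qBinom q (N + kl.1) kl.1 * q ^ ((N + 1) * kl.2) := by
  induction w with
  | zero => simp [qBinom, qFact_zero, (qFact_pos hq0 hq1 _).ne']
  | succ w ih =>
    rw [qBinom_add_succ_succ hq0 hq1, ih, Nat.sum_antidiagonal_succ', mul_sum]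
    congr 1
    · simp
    · refine sum_congr rfl fun kl _ => ?_
      ring

theorem hasSum_qBinom_mul_pow (hq0 : 0 ≤ q) (hq1 : q < 1) {x : ℝ} (hx0 : 0 ≤ x) (hx1 : x < 1)
    (N : ℕ) : HasSum (fun w => qBinom q (N + w) w * x ^ w) (ominus q x (N + 1))⁻¹ := by
  induction N with
  | zero =>
    simpa [qBinom, qFact_zero, (qFact_pos hq0 hq1 _).ne', ominus_one]
      using hasSum_geometric_of_lt_one hx0 hx1
  | succ N ih =>
    have hxq0 : 0 ≤ x * q ^ (N + 1) := by positivity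
    have hxq1 : x * q ^ (N + 1) < 1 :=
      lt_of_le_of_lt (mul_le_of_le_one_right hx0 (pow_le_one₀ hq0 hq1.le)) hx1
    convert ih.sum_antidiagonal_mul (hasSum_geometric_of_lt_one hxq0 hxq1) using 1
    · ext w
      rw [qBinom_add_succ_eq_sum_antidiagonal hq0 hq1, sum_mul]
      refine sum_congr rfl fun kl hkl => ?_
      rw [← mem_antidiagonal.mp hkl]
      ring
    · rw [ominus_succ, mul_inv]

lemma qFall_add_mul_qBinom_add (hq0 : 0 ≤ q) (hq1 : q < 1) (N w m : ℕ) :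
    qFall q ((w + m : ℕ) : ℤ) m * qBinom q (N + (w + m)) (w + m)
      = qFall q ((N + m : ℕ) : ℤ) m * qBinom q (N + m + w) w := by
  have hF (n : ℕ) := (qFact_pos hq0 hq1 n).ne'
  rw [qFall_natCast_add hq0 hq1, qFall_natCast_add hq0 hq1, qBinom_add, qBinom_add,
    show N + (w + m) = N + m + w by ring]
  field_simp [hF]

lemma qFall_add_add_mul_qBinom (hq0 : 0 ≤ q) (hq1 : q < 1) (N v m : ℕ) :
    qFall q ((N + v + m : ℕ) : ℤ) m * qBinom q (N + v) v
      = qFall q ((N + m : ℕ) : ℤ) m * qBinom q (N + m + v) v := by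
  have hF (n : ℕ) := (qFact_pos hq0 hq1 n).ne'
  rw [qFall_natCast_add hq0 hq1, qFall_natCast_add hq0 hq1, qBinom_add, qBinom_add,
    show N + v + m = N + m + v by ring]
  field_simp [hF]

theorem hasSum_qFall_add_add_mul_qBinom_mul_pow (hq0 : 0 ≤ q) (hq1 : q < 1) {x : ℝ}
    (hx0 : 0 ≤ x) (hx1 : x < 1) (N m : ℕ) :
    HasSum (fun v : ℕ => qFall q ((N + v + m : ℕ) : ℤ) m * (qBinom q (N + v) v * x ^ v))
      (qFall q ((N + m : ℕ) : ℤ) m * (ominus q x (N + m + 1))⁻¹) := by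
  refine ((hasSum_qBinom_mul_pow hq0 hq1 hx0 hx1 (N + m)).mul_left
    (qFall q ((N + m : ℕ) : ℤ) m)).congr_fun fun v => ?_
  rw [← mul_assoc, qFall_add_add_mul_qBinom hq0 hq1, mul_assoc]

theorem hasSum_qFall_mul_qBinom_mul_pow (hq0 : 0 ≤ q) (hq1 : q < 1) {x : ℝ} (hx0 : 0 ≤ x)
    (hx1 : x < 1) (N m : ℕ) :
    HasSum (fun v : ℕ => qFall q v m * (qBinom q (N + v) v * x ^ v))
      (qFall q ((N + m : ℕ) : ℤ) m * x ^ m * (ominus q x (N + m + 1))⁻¹) := by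
  rw [← hasSum_nat_add_iff' m, sum_eq_zero fun v hv => by
    rw [qFall_natCast_eq_zero (mem_range.mp hv), zero_mul], sub_zero]
  refine ((hasSum_qBinom_mul_pow hq0 hq1 hx0 hx1 (N + m)).mul_left
    (qFall q ((N + m : ℕ) : ℤ) m * x ^ m)).congr_fun fun w => ?_
  rw [← mul_assoc, qFall_add_mul_qBinom_add hq0 hq1, pow_add]
  ring

lemma vpmf_add_one (hq0 : 0 ≤ q) (hq1 : q < 1) (b1 b2 : ℝ) (k v1 v2 : ℕ) :
    vpmf q b1 b2 (k + 1) v1 v2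
      = qBinom q (k + v2 + v1) v1 * b1 ^ v1 * ominus q b1 (k + 1 + v2)
        * (qBinom q (k + v2) v2 * b2 ^ v2 * ominus q b2 (k + 1)) := by
  have hF (n : ℕ) := (qFact_pos hq0 hq1 n).ne'
  rw [vpmf, qBinom_add, qBinom_add, show k + 1 + v1 + v2 - 1 = k + v2 + v1 by omega,
    Nat.add_sub_cancel]
  field_simp [hF]

lemma qFall_mul_prod_mul_vpmf (hq0 : 0 ≤ q) (hq1 : q < 1) (b1 b2 : ℝ) (k m v1 v2 : ℕ) :
    qFall q (v1 : ℤ) m * (∏ i ∈ Icc 1 m, (1 - b1 * q ^ (k + 1 + v2 + i - 1)))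
        * vpmf q b1 b2 (k + 1) v1 v2
      = qFall q v1 m * (qBinom q (k + v2 + v1) v1 * b1 ^ v1) * (ominus q b1 (k + v2 + m + 1)
        * (qBinom q (k + v2) v2 * b2 ^ v2 * ominus q b2 (k + 1))) := by
  rw [vpmf_add_one hq0 hq1, show k + v2 + m + 1 = k + 1 + v2 + m by ring,
    ominus_add b1 (k + 1 + v2) m]
  ring

lemma qFall_mul_prod_mul_vpmf_nonneg (hq0 : 0 ≤ q) (hq1 : q < 1) {b1 b2 : ℝ} (hb1 : 0 ≤ b1)
    (hb1' : b1 < 1) (hb2 : 0 ≤ b2) (hb2' : b2 < 1) (k m v1 v2 : ℕ) :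
    0 ≤ qFall q (v1 : ℤ) m * (∏ i ∈ Icc 1 m, (1 - b1 * q ^ (k + 1 + v2 + i - 1)))
        * vpmf q b1 b2 (k + 1) v1 v2 := by
  have := qFall_natCast_nonneg hq0 hq1 v1 m
  have := qBinom_pos hq0 hq1 (k + v2 + v1) v1
  have := qBinom_pos hq0 hq1 (k + v2) v2
  have := ominus_pos hq0 hq1.le hb1 hb1' (k + v2 + m + 1)
  have := ominus_pos hq0 hq1.le hb2 hb2' (k + 1)
  rw [qFall_mul_prod_mul_vpmf hq0 hq1]
  positivity

theorem hasSum_qFall_mul_prod_mul_vpmf (hq0 : 0 ≤ q) (hq1 : q < 1) {b1 : ℝ} (hb1 : 0 ≤ b1)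
    (hb1' : b1 < 1) (b2 : ℝ) (k m v2 : ℕ) :
    HasSum (fun v1 : ℕ => qFall q (v1 : ℤ) m
        * (∏ i ∈ Icc 1 m, (1 - b1 * q ^ (k + 1 + v2 + i - 1))) * vpmf q b1 b2 (k + 1) v1 v2)
      (qFall q ((k + v2 + m : ℕ) : ℤ) m * b1 ^ m
        * (qBinom q (k + v2) v2 * b2 ^ v2 * ominus q b2 (k + 1))) := by
  have h := (hasSum_qFall_mul_qBinom_mul_pow hq0 hq1 hb1 hb1' (k + v2) m).mul_right
    (ominus q b1 (k + v2 + m + 1) * (qBinom q (k + v2) v2 * b2 ^ v2 * ominus q b2 (k + 1)))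
  rw [mul_assoc _ (ominus q b1 _)⁻¹,
    inv_mul_cancel_left₀ (ominus_pos hq0 hq1.le hb1 hb1' _).ne'] at h
  exact h.congr_fun fun v1 => qFall_mul_prod_mul_vpmf hq0 hq1 b1 b2 k m v1 v2

end qCalculus

theorem stmt17 (q : ℝ) (hq0 : 0 < q) (hq1 : q < 1) (n : ℕ) (hn : 1 ≤ n) (β1 β2 : ℝ)
    (hβ1 : 0 < β1) (hβ1' : β1 < 1) (hβ2 : 0 < β2) (hβ2' : β2 < 1) (m1 : ℕ) :
    HasSum (fun v : ℕ × ℕ =>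
        qFall q (v.1 : ℤ) m1 * (∏ i ∈ Finset.Icc 1 m1, (1 - β1 * q ^ (n + v.2 + i - 1)))
          * vpmf q β1 β2 n v.1 v.2)
      (qFall q ((n : ℤ) + (m1 : ℤ) - 1) m1 * β1 ^ m1 /
        ∏ i ∈ Finset.Icc 1 m1, (1 - β2 * q ^ (n + i - 1))) := by
  obtain ⟨k, rfl⟩ : ∃ k, n = k + 1 := ⟨n - 1, by omega⟩
  have hq := hq0.le
  refine HasSum.prod_of_nonneg_of_fiberwise
    (fun v => qFall_mul_prod_mul_vpmf_nonneg hq hq1 hβ1.le hβ1' hβ2.le hβ2' k m1 v.1 v.2)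
    (hasSum_qFall_mul_prod_mul_vpmf hq hq1 hβ1.le hβ1' β2 k m1) ?_
  have h := (hasSum_qFall_add_add_mul_qBinom_mul_pow hq hq1 hβ2.le hβ2' k m1).mul_left
    (β1 ^ m1 * ominus q β2 (k + 1))
  have hsplit := ominus_add (q := q) β2 (k + 1) m1
  have hprod : ∏ i ∈ Icc 1 m1, (1 - β2 * q ^ (k + 1 + i - 1)) ≠ 0 :=
    right_ne_zero_of_mul (hsplit ▸ (ominus_pos hq hq1.le hβ2.le hβ2' _).ne')
  refine (congrArg (HasSum _) ?_).mp (h.congr_fun fun v2 => by ring)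
  rw [show ((k + 1 : ℕ) : ℤ) + m1 - 1 = ((k + m1 : ℕ) : ℤ) by push_cast; ring,
    show k + m1 + 1 = k + 1 + m1 by ring, hsplit]
  field_simp [(ominus_pos hq hq1.le hβ2.le hβ2' (k + 1)).ne']
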